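/- arXiv:2410.23225 — 2 statements merged into one kernel-verified Lean document; each statement's English description precedes it below -/
import Mathlib

section
/- Let (Ω,d) be a finite nonempty metric space, C > 0 and δ ∈ (0,1). Let P,Q : Ω → (probability distributions on Ω) be Markov transition kernels with stationary distributions μ and ν respectively (i.e. Σ_x μ(x)·P(x)(y) = μ(y) for all y ∈ Ω, and similarly for ν and Q). Suppose that (a) for every X in the support of μ, W_d(P(X),Q(X)) ≤ C, and (b) for every X in the support of μ and every Y in the support of ν, W_d(Q(X),Q(Y)) ≤ (1−δ)·d(X,Y). Then W_d(μ,ν) ≤ C/δ. -/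
open scoped Classical BigOperators

noncomputable section

namespace SpinFormal

variable {V : Type} [Fintype V] [DecidableEq V] {q : ℕ}

/-- `μ` is a probability distribution on the finite type `Ω`. -/
def IsDist {Ω : Type} [Fintype Ω] (μ : Ω → ℝ) : Prop :=
  (∀ x, 0 ≤ μ x) ∧ ∑ x, μ x = 1

/-- `π` is a coupling of `μ` and `ν`. -/
def IsCoupling {Ω₁ Ω₂ : Type} [Fintype Ω₁] [Fintype Ω₂]
    (π : Ω₁ × Ω₂ → ℝ) (μ : Ω₁ → ℝ) (ν : Ω₂ → ℝ) : Prop :=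
  (∀ p, 0 ≤ π p) ∧ (∀ x, ∑ y, π (x, y) = μ x) ∧ (∀ y, ∑ x, π (x, y) = ν y)

/-- 1-Wasserstein distance with respect to a cost `d`. -/
def Wass {Ω₁ Ω₂ : Type} [Fintype Ω₁] [Fintype Ω₂] (d : Ω₁ → Ω₂ → ℝ)
    (μ : Ω₁ → ℝ) (ν : Ω₂ → ℝ) : ℝ :=
  sInf {c : ℝ | ∃ π : Ω₁ × Ω₂ → ℝ, IsCoupling π μ ν ∧ ∑ p : Ω₁ × Ω₂, π p * d p.1 p.2 = c}

/-- Hamming distance between two configurations, as a real number. -/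
def hamming {W : Type} [Fintype W] {α : Type} [DecidableEq α] (σ τ : W → α) : ℝ :=
  ((Finset.univ.filter fun w => σ w ≠ τ w).card : ℝ)

/-- Total variation distance between two functions on a finite type. -/
def tvDist {X : Type} [Fintype X] (μ ν : X → ℝ) : ℝ := (∑ x, |μ x - ν x|) / 2

/-- The symmetrised edge interaction, as a function on unordered pairs.
When `AE` is symmetric this is just `AE (τ u) (τ v)` on the edge `{u,v}`. -/
def edgeFactor (AE : Fin q → Fin q → ℝ) (τ : V → Fin q) : Sym2 V → ℝ :=
  Sym2.lift ⟨fun u v => (AE (τ u) (τ v) + AE (τ v) (τ u)) / 2, fun u v => by simp [add_comm]⟩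

/-- The conditional weight `w^σ(τ)` for the pinning `σ` on `Λ`: products range over
vertices outside `Λ` and edges with at least one endpoint outside `Λ`. -/
def condWeight (G : SimpleGraph V) (AE : Fin q → Fin q → ℝ) (AV : Fin q → ℝ)
    (Λ : Finset V) (σ τ : V → Fin q) : ℝ :=
  (if ∀ v ∈ Λ, τ v = σ v then (1 : ℝ) else 0)
    * (∏ v ∈ Λᶜ, AV (τ v))
    * ∏ e ∈ Finset.univ.filter
        (fun e : Sym2 V => e ∈ G.edgeSet ∧ ¬ ∀ v ∈ e, v ∈ Λ), edgeFactor AE τ e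

/-- The conditional partition function `Z^σ`. -/
def condZ (G : SimpleGraph V) (AE : Fin q → Fin q → ℝ) (AV : Fin q → ℝ)
    (Λ : Finset V) (σ : V → Fin q) : ℝ :=
  ∑ τ : V → Fin q, condWeight G AE AV Λ σ τ

/-- The conditional Gibbs distribution `μ^σ`. -/
def condDist (G : SimpleGraph V) (AE : Fin q → Fin q → ℝ) (AV : Fin q → ℝ)
    (Λ : Finset V) (σ : V → Fin q) : (V → Fin q) → ℝ :=
  fun τ => condWeight G AE AV Λ σ τ / condZ G AE AV Λ σ

/-- A spin system is permissive if every conditional partition function is positive. -/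
def Permissive (G : SimpleGraph V) (AE : Fin q → Fin q → ℝ) (AV : Fin q → ℝ) : Prop :=
  ∀ (Λ : Finset V) (σ : V → Fin q), 0 < condZ G AE AV Λ σ

/-- Marginal of a distribution on configurations at a single vertex. -/
def marginalAt (μ : (V → Fin q) → ℝ) (u : V) (c : Fin q) : ℝ :=
  ∑ τ : V → Fin q, if τ u = c then μ τ else 0

/-- Marginal probability of a partial configuration `σ` on `Λ`. -/
def margOn (μ : (V → Fin q) → ℝ) (Λ : Finset V) (σ : V → Fin q) : ℝ :=
  ∑ τ : V → Fin q, if ∀ v ∈ Λ, τ v = σ v then μ τ else 0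

/-- Two partial configurations on `Λ` differ exactly at the vertex `v ∈ Λ`. -/
def DifferOnlyAt (Λ : Finset V) (σ τ : V → Fin q) (v : V) : Prop :=
  v ∈ Λ ∧ σ v ≠ τ v ∧ ∀ u ∈ Λ, u ≠ v → σ u = τ u

/-- `C`-coupling independence of the Gibbs distribution of a spin system. -/
def CouplingIndependence (G : SimpleGraph V) (AE : Fin q → Fin q → ℝ)
    (AV : Fin q → ℝ) (C : ℝ) : Prop :=
  ∀ (Λ : Finset V) (σ τ : V → Fin q) (v : V), DifferOnlyAt Λ σ τ v →
    Wass hamming (condDist G AE AV Λ σ) (condDist G AE AV Λ τ) ≤ C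

/-- The sphere of radius `ℓ` around `v` in `G` (w.r.t. graph distance). -/
def sphere (G : SimpleGraph V) (v : V) (ℓ : ℕ) : Finset V :=
  Finset.univ.filter fun u => G.Reachable v u ∧ G.dist v u = ℓ

end SpinFormal

open SpinFormal

/-! Start from a near-optimal coupling `π` of `μ` and `ν`, and move each pair `(x, y)` by a
near-optimal coupling of `P x` and `Q y`. By stationarity the mixture is again a coupling of `μ`
and `ν`. On the support of `π`, gluing couplings (the triangle inequality for `W`) bounds
`W(P x, Q y) ≤ W(P x, Q x) + W(Q x, Q y) ≤ C + (1 - δ) d(x, y)`, so averaging over `π` gives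
`W(μ, ν) ≤ C + (1 - δ) W(μ, ν)`, i.e. `δ W(μ, ν) ≤ C`. -/

namespace SpinFormal

section Coupling

variable {Ω₁ Ω₂ Ω₃ : Type} [Fintype Ω₁] [Fintype Ω₂] [Fintype Ω₃]

def couplingCost (d : Ω₁ → Ω₂ → ℝ) (π : Ω₁ × Ω₂ → ℝ) : ℝ :=
  ∑ p : Ω₁ × Ω₂, π p * d p.1 p.2

namespace IsCoupling

variable {π : Ω₁ × Ω₂ → ℝ} {μ : Ω₁ → ℝ} {ν : Ω₂ → ℝ}

lemma apply_le_left (hπ : IsCoupling π μ ν) (x : Ω₁) (y : Ω₂) : π (x, y) ≤ μ x := by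
  rw [← hπ.2.1 x]
  exact Finset.single_le_sum (fun y _ => hπ.1 (x, y)) (Finset.mem_univ y)

lemma apply_le_right (hπ : IsCoupling π μ ν) (x : Ω₁) (y : Ω₂) : π (x, y) ≤ ν y := by
  rw [← hπ.2.2 y]
  exact Finset.single_le_sum (fun x _ => hπ.1 (x, y)) (Finset.mem_univ x)

lemma apply_eq_zero_of_left (hπ : IsCoupling π μ ν) {x : Ω₁} (h : μ x = 0) (y : Ω₂) :
    π (x, y) = 0 :=
  le_antisymm (h ▸ hπ.apply_le_left x y) (hπ.1 _)

lemma apply_eq_zero_of_right (hπ : IsCoupling π μ ν) (x : Ω₁) {y : Ω₂} (h : ν y = 0) :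
    π (x, y) = 0 :=
  le_antisymm (h ▸ hπ.apply_le_right x y) (hπ.1 _)

lemma sum_eq (hπ : IsCoupling π μ ν) : ∑ p, π p = ∑ x, μ x := by
  rw [Fintype.sum_prod_type]
  exact Finset.sum_congr rfl fun x _ => hπ.2.1 x

end IsCoupling

lemma isCoupling_prod {μ : Ω₁ → ℝ} {ν : Ω₂ → ℝ} (hμ : IsDist μ) (hν : IsDist ν) :
    IsCoupling (fun p => μ p.1 * ν p.2) μ ν := by
  refine ⟨fun p => mul_nonneg (hμ.1 _) (hν.1 _), fun x => ?_, fun y => ?_⟩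
  · simp [← Finset.mul_sum, hν.2]
  · simp [← Finset.sum_mul, hμ.2]

lemma wass_le_couplingCost {d : Ω₁ → Ω₂ → ℝ} (hd : ∀ x y, 0 ≤ d x y)
    {π : Ω₁ × Ω₂ → ℝ} {μ : Ω₁ → ℝ} {ν : Ω₂ → ℝ} (hπ : IsCoupling π μ ν) :
    Wass d μ ν ≤ couplingCost d π := by
  refine csInf_le ⟨0, ?_⟩ ⟨π, hπ, rfl⟩
  rintro _ ⟨π', hπ', rfl⟩
  exact Finset.sum_nonneg fun p _ => mul_nonneg (hπ'.1 p) (hd _ _)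

lemma exists_couplingCost_lt {d : Ω₁ → Ω₂ → ℝ} {μ : Ω₁ → ℝ} {ν : Ω₂ → ℝ}
    (hμ : IsDist μ) (hν : IsDist ν) {ε : ℝ} (hε : 0 < ε) :
    ∃ π, IsCoupling π μ ν ∧ couplingCost d π < Wass d μ ν + ε := by
  have hne : {c | ∃ π, IsCoupling π μ ν ∧ couplingCost d π = c}.Nonempty :=
    ⟨_, _, isCoupling_prod hμ hν, rfl⟩
  obtain ⟨_, ⟨π, hπ, rfl⟩, hlt⟩ := exists_lt_of_csInf_lt hne (lt_add_of_pos_right (Wass d μ ν) hε)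
  exact ⟨π, hπ, hlt⟩

/-- Couple `α` and `β` conditionally independently given their common marginal `b`. Where
`b v = 0` the junk value `x / 0 = 0` is harmless, since then `α (·, v)` and `β (v, ·)` vanish. -/
def gluedCoupling (α : Ω₁ × Ω₂ → ℝ) (β : Ω₂ × Ω₃ → ℝ) (b : Ω₂ → ℝ) : Ω₁ × Ω₃ → ℝ :=
  fun p => ∑ v, α (p.1, v) * β (v, p.2) / b v

lemma IsCoupling.gluedCoupling {α : Ω₁ × Ω₂ → ℝ} {β : Ω₂ × Ω₃ → ℝ}
    {a : Ω₁ → ℝ} {b : Ω₂ → ℝ} {c : Ω₃ → ℝ}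
    (hα : IsCoupling α a b) (hβ : IsCoupling β b c) :
    IsCoupling (gluedCoupling α β b) a c := by
  refine ⟨fun p => Finset.sum_nonneg fun v _ => ?_, fun u => ?_, fun w => ?_⟩
  · exact div_nonneg (mul_nonneg (hα.1 _) (hβ.1 _)) ((hα.1 _).trans (hα.apply_le_right p.1 v))
  · rw [← hα.2.1 u]
    simp only [SpinFormal.gluedCoupling]
    rw [Finset.sum_comm]
    refine Finset.sum_congr rfl fun v _ => ?_
    rw [← Finset.sum_div, ← Finset.mul_sum, hβ.2.1 v,
      mul_div_cancel_of_imp fun h => hα.apply_eq_zero_of_right u h]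
  · rw [← hβ.2.2 w]
    simp only [SpinFormal.gluedCoupling]
    rw [Finset.sum_comm]
    refine Finset.sum_congr rfl fun v _ => ?_
    rw [← Finset.sum_div, ← Finset.sum_mul, hα.2.2 v,
      mul_div_cancel_left_of_imp fun h => hβ.apply_eq_zero_of_left h w]

def mixture {S X : Type} [Fintype S] (w : S → ℝ) (K : S → X → ℝ) : X → ℝ :=
  fun x => ∑ s, w s * K s x

variable {S T : Type} [Fintype S] [Fintype T]

lemma IsCoupling.mixture {π : S × T → ℝ} {μ : S → ℝ} {ν : T → ℝ} (hπ : IsCoupling π μ ν)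
    {P : S → Ω₁ → ℝ} {Q : T → Ω₂ → ℝ} {κ : S × T → Ω₁ × Ω₂ → ℝ}
    (hκ : ∀ p, IsCoupling (κ p) (P p.1) (Q p.2)) :
    IsCoupling (mixture π κ) (mixture μ P) (mixture ν Q) := by
  refine ⟨fun q => Finset.sum_nonneg fun p _ => mul_nonneg (hπ.1 p) ((hκ p).1 q),
    fun x => ?_, fun y => ?_⟩
  · simp only [SpinFormal.mixture]
    rw [Finset.sum_comm]
    simp only [← Finset.mul_sum, (hκ _).2.1]
    rw [Fintype.sum_prod_type]
    simp only [← Finset.sum_mul, hπ.2.1]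
  · simp only [SpinFormal.mixture]
    rw [Finset.sum_comm]
    simp only [← Finset.mul_sum, (hκ _).2.2]
    rw [Fintype.sum_prod_type, Finset.sum_comm]
    simp only [← Finset.sum_mul, hπ.2.2]

lemma couplingCost_mixture (d : Ω₁ → Ω₂ → ℝ) (π : S × T → ℝ) (κ : S × T → Ω₁ × Ω₂ → ℝ) :
    couplingCost d (mixture π κ) = ∑ p, π p * couplingCost d (κ p) := by
  simp only [couplingCost, mixture, Finset.sum_mul, Finset.mul_sum, mul_assoc]
  exact Finset.sum_comm

lemma wass_mixture_le {d : Ω₁ → Ω₂ → ℝ} (hd : ∀ x y, 0 ≤ d x y)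
    {π : S × T → ℝ} {μ : S → ℝ} {ν : T → ℝ} (hπ : IsCoupling π μ ν) (hμ : ∑ s, μ s = 1)
    {P : S → Ω₁ → ℝ} {Q : T → Ω₂ → ℝ} (hP : ∀ s, IsDist (P s)) (hQ : ∀ t, IsDist (Q t)) :
    Wass d (mixture μ P) (mixture ν Q) ≤ ∑ p, π p * Wass d (P p.1) (Q p.2) := by
  refine le_of_forall_pos_le_add fun ε hε => ?_
  choose κ hκ hκε using fun p : S × T => exists_couplingCost_lt (d := d) (hP p.1) (hQ p.2) hε
  calc Wass d (mixture μ P) (mixture ν Q)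
      ≤ couplingCost d (mixture π κ) := wass_le_couplingCost hd (hπ.mixture hκ)
    _ = ∑ p, π p * couplingCost d (κ p) := couplingCost_mixture d π κ
    _ ≤ ∑ p, π p * (Wass d (P p.1) (Q p.2) + ε) := by
        gcongr with p
        · exact hπ.1 p
        · exact (hκε p).le
    _ = ∑ p, π p * Wass d (P p.1) (Q p.2) + ε := by
        simp only [mul_add, Finset.sum_add_distrib, ← Finset.sum_mul, hπ.sum_eq, hμ, one_mul]

end Coupling

section Metric

variable {Ω : Type} [Fintype Ω] [MetricSpace Ω]

lemma couplingCost_gluedCoupling_le {α β : Ω × Ω → ℝ} {a b c : Ω → ℝ}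
    (hα : IsCoupling α a b) (hβ : IsCoupling β b c) :
    couplingCost dist (gluedCoupling α β b) ≤ couplingCost dist α + couplingCost dist β := by
  have hleft : ∀ u v, ∑ w, α (u, v) * β (v, w) / b v * dist u v = α (u, v) * dist u v := by
    intro u v
    rw [← Finset.sum_mul, ← Finset.sum_div, ← Finset.mul_sum, hβ.2.1 v,
      mul_div_cancel_of_imp (hα.apply_eq_zero_of_right u)]
  have hright : ∀ v w, ∑ u, α (u, v) * β (v, w) / b v * dist v w = β (v, w) * dist v w := by
    intro v w
    rw [← Finset.sum_mul, ← Finset.sum_div, ← Finset.sum_mul, hα.2.2 v,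
      mul_div_cancel_left_of_imp fun h => hβ.apply_eq_zero_of_left h w]
  simp only [couplingCost, gluedCoupling, Fintype.sum_prod_type, Finset.sum_mul]
  calc ∑ u, ∑ w, ∑ v, α (u, v) * β (v, w) / b v * dist u w
      ≤ ∑ u, ∑ w, ∑ v, α (u, v) * β (v, w) / b v * (dist u v + dist v w) := by
        gcongr with u _ w _ v _
        · exact div_nonneg (mul_nonneg (hα.1 _) (hβ.1 _)) ((hα.1 _).trans (hα.apply_le_right u v))
        · exact dist_triangle u v w
    _ = ∑ u, ∑ v, α (u, v) * dist u v + ∑ v, ∑ w, β (v, w) * dist v w := by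
        simp only [mul_add, Finset.sum_add_distrib]
        congr 1
        · exact Finset.sum_congr rfl fun u _ => by rw [Finset.sum_comm]; simp only [hleft]
        · trans ∑ w, ∑ v, ∑ u, α (u, v) * β (v, w) / b v * dist v w
          · rw [Finset.sum_comm]
            exact Finset.sum_congr rfl fun w _ => Finset.sum_comm
          · simp only [hright]
            exact Finset.sum_comm

lemma wass_triangle {a b c : Ω → ℝ} (ha : IsDist a) (hb : IsDist b) (hc : IsDist c) :
    Wass dist a c ≤ Wass dist a b + Wass dist b c := by
  refine le_of_forall_pos_le_add fun ε hε => ?_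
  obtain ⟨α, hα, hαε⟩ := exists_couplingCost_lt (d := dist) ha hb (half_pos hε)
  obtain ⟨β, hβ, hβε⟩ := exists_couplingCost_lt (d := dist) hb hc (half_pos hε)
  have hγ := wass_le_couplingCost (d := dist) (fun _ _ => dist_nonneg) (hα.gluedCoupling hβ)
  have hγcost := couplingCost_gluedCoupling_le hα hβ
  linarith

end Metric

end SpinFormal

theorem wasserstein_le_of_contractive_coupling_general
    {Ω : Type} [Fintype Ω] [MetricSpace Ω]
    (C δ : ℝ) (hδ0 : 0 < δ) (hδ1 : δ < 1)
    (P Q : Ω → Ω → ℝ) (μ ν : Ω → ℝ)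
    (hμ : IsDist μ) (hν : IsDist ν)
    (hP : ∀ x : Ω, IsDist (P x)) (hQ : ∀ x : Ω, IsDist (Q x))
    (hμstat : ∀ y : Ω, ∑ x : Ω, μ x * P x y = μ y)
    (hνstat : ∀ y : Ω, ∑ x : Ω, ν x * Q x y = ν y)
    (hdis : ∀ x : Ω, 0 < μ x → Wass dist (P x) (Q x) ≤ C)
    (hcontr : ∀ x y : Ω, 0 < μ x → 0 < ν y →
      Wass dist (Q x) (Q y) ≤ (1 - δ) * dist x y) :
    Wass dist μ ν ≤ C / δ := by
  have hμP : mixture μ P = μ := funext hμstat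
  have hνQ : mixture ν Q = ν := funext hνstat
  have hstep : ∀ ε > 0, Wass dist μ ν ≤ C + (1 - δ) * (Wass dist μ ν + ε) := by
    intro ε hε
    obtain ⟨π, hπ, hπε⟩ := exists_couplingCost_lt (d := dist) hμ hν hε
    have hpair : ∀ p : Ω × Ω,
        π p * Wass dist (P p.1) (Q p.2) ≤ π p * (C + (1 - δ) * dist p.1 p.2) := by
      rintro ⟨x, y⟩
      rcases (hπ.1 (x, y)).eq_or_lt with h0 | hpos
      · simp [← h0]
      have hx : 0 < μ x := hpos.trans_le (hπ.apply_le_left x y)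
      have hy : 0 < ν y := hpos.trans_le (hπ.apply_le_right x y)
      gcongr
      calc Wass dist (P x) (Q y) ≤ Wass dist (P x) (Q x) + Wass dist (Q x) (Q y) :=
            wass_triangle (hP x) (hQ x) (hQ y)
        _ ≤ C + (1 - δ) * dist x y := add_le_add (hdis x hx) (hcontr x y hx hy)
    calc Wass dist μ ν = Wass dist (mixture μ P) (mixture ν Q) := by rw [hμP, hνQ]
      _ ≤ ∑ p, π p * Wass dist (P p.1) (Q p.2) :=
          wass_mixture_le (fun _ _ => dist_nonneg) hπ hμ.2 hP hQ
      _ ≤ ∑ p, π p * (C + (1 - δ) * dist p.1 p.2) := Finset.sum_le_sum fun p _ => hpair p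
      _ = C + (1 - δ) * couplingCost dist π := by
          simp only [couplingCost, mul_add, Finset.sum_add_distrib, ← Finset.sum_mul, hπ.sum_eq,
            hμ.2, one_mul, mul_left_comm _ (1 - δ), ← Finset.mul_sum]
      _ ≤ C + (1 - δ) * (Wass dist μ ν + ε) := by
          have h1δ : 0 ≤ 1 - δ := by linarith
          gcongr
  rw [le_div_iff₀ hδ0]
  refine le_of_forall_pos_le_add fun ε hε => ?_
  nlinarith [hstep ε hε, mul_pos hδ0 hε]

/-- if `P` has `C`-disagreement with `Q` on the support of `μ` and `Q` is
`δ`-contractive, then `W_d(μ,ν) ≤ C/δ` for the stationary distributions `μ, ν`. -/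
theorem wasserstein_le_of_contractive_coupling
    {Ω : Type} [Fintype Ω] [Nonempty Ω] [MetricSpace Ω]
    (C δ : ℝ) (hC : 0 < C) (hδ0 : 0 < δ) (hδ1 : δ < 1)
    (P Q : Ω → Ω → ℝ) (μ ν : Ω → ℝ)
    (hμ : IsDist μ) (hν : IsDist ν)
    (hP : ∀ x : Ω, IsDist (P x)) (hQ : ∀ x : Ω, IsDist (Q x))
    (hμstat : ∀ y : Ω, ∑ x : Ω, μ x * P x y = μ y)
    (hνstat : ∀ y : Ω, ∑ x : Ω, ν x * Q x y = ν y)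
    (hdis : ∀ x : Ω, 0 < μ x → Wass dist (P x) (Q x) ≤ C)
    (hcontr : ∀ x y : Ω, 0 < μ x → 0 < ν y →
      Wass dist (Q x) (Q y) ≤ (1 - δ) * dist x y) :
    Wass dist μ ν ≤ C / δ :=
  wasserstein_le_of_contractive_coupling_general C δ hδ0 hδ1 P Q μ ν hμ hν hP hQ hμstat hνstat hdis
    hcontr
end
end

section
/- Let μ be the Gibbs distribution of a permissive spin system (G,q,A_E,A_V) on n = |V| vertices, and suppose μ satisfies the Dobrushin–Shlosman condition with gap δ ∈ (0,1). Let P be the Glauber dynamics for μ. Then for all configurations X,Y : V → [q], W(P(X),P(Y)) ≤ (1 − δ/n)·dist(X,Y), where W is the Wasserstein distance with respect to Hamming distance. -/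
open scoped Classical BigOperators

noncomputable section

namespace SpinFormal

variable {V : Type} [Fintype V] [DecidableEq V] {q : ℕ}

/-- The Dobrushin influence `ρ(u,v)`: supremum of `d_TV(μ^σ_v, μ^τ_v)` over pairs of
pinnings on `V∖{v}` differing at most at `u`. -/
noncomputable def dobrushinRho (G : SimpleGraph V) (AE : Fin q → Fin q → ℝ)
    (AV : Fin q → ℝ) (u v : V) : ℝ :=
  sSup {t : ℝ | ∃ σ τ : V → Fin q, (∀ w : V, w ≠ u → σ w = τ w) ∧
    t = tvDist (marginalAt (condDist G AE AV ({v} : Finset V)ᶜ σ) v)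
               (marginalAt (condDist G AE AV ({v} : Finset V)ᶜ τ) v)}

/-- The Dobrushin–Shlosman condition with gap `δ`. -/
def DobrushinShlosman (G : SimpleGraph V) (AE : Fin q → Fin q → ℝ)
    (AV : Fin q → ℝ) (δ : ℝ) : Prop :=
  ∀ u : V, ∑ v : V, dobrushinRho G AE AV u v ≤ 1 - δ

/-- One step of the Glauber dynamics for the Gibbs distribution, started from `X`:
pick a uniformly random vertex `v` and resample `X(v)` from the conditional marginal. -/
noncomputable def glauberStep (G : SimpleGraph V) (AE : Fin q → Fin q → ℝ)
    (AV : Fin q → ℝ) (X : V → Fin q) : (V → Fin q) → ℝ := fun Y =>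
  (1 / (Fintype.card V : ℝ)) * ∑ v : V,
    (if ∀ u : V, u ≠ v → Y u = X u then
      marginalAt (condDist G AE AV ({v} : Finset V)ᶜ X) v (Y v)
    else 0)

end SpinFormal

/-!
Couple one Glauber step from `X` and from `Y` by updating the same uniformly random vertex `v`
in both chains and drawing the two new spins at `v` from a maximal coupling of the conditional
marginals there. Disagreements away from `v` persist, while the new spins at `v` disagree with
probability `d_TV(μ^X_v, μ^Y_v)`; changing `X` into `Y` one disagreeing vertex `u` at a time
bounds this by `∑_{u : X u ≠ Y u} ρ(u,v)`. Averaging over `v` and using `∑_v ρ(u,v) ≤ 1 - δ`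
gives expected distance at most `(n·d - d + (1 - δ)·d)/n = (1 - δ/n)·d` where `d = dist(X,Y)`.
-/

namespace SpinFormal

section TotalVariation

variable {Ω : Type} [Fintype Ω]

lemma tvDist_nonneg (μ ν : Ω → ℝ) : 0 ≤ tvDist μ ν := by
  unfold tvDist
  positivity

lemma tvDist_self (μ : Ω → ℝ) : tvDist μ μ = 0 := by
  simp [tvDist]

lemma tvDist_comm (μ ν : Ω → ℝ) : tvDist μ ν = tvDist ν μ := by
  simp only [tvDist, abs_sub_comm]

lemma tvDist_triangle (μ κ ν : Ω → ℝ) : tvDist μ ν ≤ tvDist μ κ + tvDist κ ν := by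
  rw [tvDist, tvDist, tvDist, ← add_div, ← Finset.sum_add_distrib]
  gcongr with x
  exact abs_sub_le _ _ _

lemma tvDist_le_one {μ ν : Ω → ℝ} (hμ : IsDist μ) (hν : IsDist ν) : tvDist μ ν ≤ 1 := by
  rw [tvDist, div_le_one two_pos]
  calc ∑ x, |μ x - ν x| ≤ ∑ x, (μ x + ν x) := by
        gcongr with x
        exact (abs_sub _ _).trans_eq (by rw [abs_of_nonneg (hμ.1 x), abs_of_nonneg (hν.1 x)])
    _ = 2 := by rw [Finset.sum_add_distrib, hμ.2, hν.2]; norm_num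

lemma sum_sub_min_eq_tvDist {μ ν : Ω → ℝ} (hμ : ∑ x, μ x = 1) (hν : ∑ x, ν x = 1) :
    ∑ x, (μ x - min (μ x) (ν x)) = tvDist μ ν := by
  have habs : ∀ x, |μ x - ν x| = (μ x - min (μ x) (ν x)) + (ν x - min (μ x) (ν x)) := by
    intro x
    rcases le_total (μ x) (ν x) with h | h
    · rw [abs_of_nonpos (sub_nonpos.2 h), min_eq_left h]; ring
    · rw [abs_of_nonneg (sub_nonneg.2 h), min_eq_right h]; ring
  have hbalance : ∑ x, (μ x - min (μ x) (ν x)) = ∑ x, (ν x - min (μ x) (ν x)) := by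
    simp only [Finset.sum_sub_distrib, hμ, hν]
  rw [tvDist, Finset.sum_congr rfl fun x _ => habs x, Finset.sum_add_distrib, ← hbalance]
  ring

lemma sum_sub_min_eq_tvDist' {μ ν : Ω → ℝ} (hμ : ∑ x, μ x = 1) (hν : ∑ x, ν x = 1) :
    ∑ x, (ν x - min (μ x) (ν x)) = tvDist μ ν := by
  simp only [min_comm (μ _)]
  rw [tvDist_comm]
  exact sum_sub_min_eq_tvDist hν hμ

-- when `tvDist μ ν = 0` every excess vanishes, so dividing by it does no harm
lemma mul_tvDist_div_tvDist {μ ν e : Ω → ℝ} (he : ∀ x, 0 ≤ e x) (hsum : ∑ x, e x = tvDist μ ν)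
    (x : Ω) : e x * tvDist μ ν / tvDist μ ν = e x := by
  rcases eq_or_ne (tvDist μ ν) 0 with ht | ht
  · have : e x ≤ 0 := by
      rw [← ht, ← hsum]
      exact Finset.single_le_sum (fun y _ => he y) (Finset.mem_univ x)
    simp [le_antisymm this (he x)]
  · exact mul_div_cancel_right₀ _ ht

end TotalVariation

section Coupling

variable {Ω : Type} [Fintype Ω] [DecidableEq Ω] {μ ν : Ω → ℝ}

def overlapCoupling (μ ν : Ω → ℝ) : Ω × Ω → ℝ := fun p =>
  (if p.1 = p.2 then min (μ p.1) (ν p.1) else 0)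
    + (μ p.1 - min (μ p.1) (ν p.1)) * (ν p.2 - min (μ p.2) (ν p.2)) / tvDist μ ν

lemma isCoupling_overlapCoupling (hμ : IsDist μ) (hν : IsDist ν) :
    IsCoupling (overlapCoupling μ ν) μ ν := by
  have hμ0 : ∀ x, 0 ≤ μ x - min (μ x) (ν x) := fun x => sub_nonneg.2 (min_le_left _ _)
  have hν0 : ∀ x, 0 ≤ ν x - min (μ x) (ν x) := fun x => sub_nonneg.2 (min_le_right _ _)
  have hexμ := sum_sub_min_eq_tvDist hμ.2 hν.2
  have hexν := sum_sub_min_eq_tvDist' hμ.2 hν.2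
  refine ⟨fun p => ?_, fun x => ?_, fun y => ?_⟩
  · have ht := tvDist_nonneg μ ν
    have hmin : 0 ≤ min (μ p.1) (ν p.1) := le_min (hμ.1 _) (hν.1 _)
    have := hμ0 p.1
    have := hν0 p.2
    unfold overlapCoupling
    split_ifs <;> positivity
  · simp only [overlapCoupling, Finset.sum_add_distrib, Finset.sum_ite_eq, Finset.mem_univ,
      if_true]
    rw [← Finset.sum_div, ← Finset.mul_sum, hexν, mul_tvDist_div_tvDist hμ0 hexμ]
    ring
  · simp only [overlapCoupling, Finset.sum_add_distrib, Finset.sum_ite_eq', Finset.mem_univ,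
      if_true]
    rw [← Finset.sum_div, ← Finset.sum_mul, hexμ, mul_comm, mul_tvDist_div_tvDist hν0 hexν]
    ring

lemma overlapCoupling_offDiag_le (hμ : IsDist μ) (hν : IsDist ν) :
    ∑ p : Ω × Ω, overlapCoupling μ ν p * (if p.1 = p.2 then 0 else 1) ≤ tvDist μ ν := by
  have hexμ := sum_sub_min_eq_tvDist hμ.2 hν.2
  have hexν := sum_sub_min_eq_tvDist' hμ.2 hν.2
  have hterm_nonneg : ∀ p : Ω × Ω,
      0 ≤ (μ p.1 - min (μ p.1) (ν p.1)) * (ν p.2 - min (μ p.2) (ν p.2)) / tvDist μ ν := by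
    intro p
    have ht := tvDist_nonneg μ ν
    have := sub_nonneg.2 (min_le_left (μ p.1) (ν p.1))
    have := sub_nonneg.2 (min_le_right (μ p.2) (ν p.2))
    positivity
  calc ∑ p : Ω × Ω, overlapCoupling μ ν p * (if p.1 = p.2 then 0 else 1)
      ≤ ∑ p : Ω × Ω,
          (μ p.1 - min (μ p.1) (ν p.1)) * (ν p.2 - min (μ p.2) (ν p.2)) / tvDist μ ν := by
        gcongr with p
        split_ifs with h
        · simpa using hterm_nonneg p
        · simp [overlapCoupling, h]
    _ = tvDist μ ν := by
        rw [← Finset.sum_div, Fintype.sum_prod_type]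
        dsimp only
        rw [← Finset.sum_mul_sum, hexμ, hexν, mul_self_div_self]

lemma wass_le_of_isCoupling {Ω₁ Ω₂ : Type} [Fintype Ω₁] [Fintype Ω₂] {d : Ω₁ → Ω₂ → ℝ}
    (hd : ∀ x y, 0 ≤ d x y) {π : Ω₁ × Ω₂ → ℝ} {μ : Ω₁ → ℝ} {ν : Ω₂ → ℝ}
    (hπ : IsCoupling π μ ν) : Wass d μ ν ≤ ∑ p, π p * d p.1 p.2 := by
  refine csInf_le ⟨0, ?_⟩ ⟨π, hπ, rfl⟩
  rintro c ⟨π', hπ', rfl⟩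
  exact Finset.sum_nonneg fun p _ => mul_nonneg (hπ'.1 p) (hd _ _)

end Coupling

section Hamming

variable {V α : Type} [Fintype V] [DecidableEq α]

lemma hamming_nonneg (σ τ : V → α) : 0 ≤ hamming σ τ := Nat.cast_nonneg _

lemma hamming_eq_sum (σ τ : V → α) : hamming σ τ = ∑ w, if σ w = τ w then 0 else 1 := by
  simp [hamming, Finset.card_filter, ite_not]

lemma hamming_update_add [DecidableEq V] (X Y : V → α) (v : V) (a b : α) :
    hamming (Function.update X v a) (Function.update Y v b) + (if X v = Y v then 0 else 1)
      = hamming X Y + (if a = b then 0 else 1) := by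
  simp only [hamming_eq_sum, ← Finset.add_sum_erase _ _ (Finset.mem_univ v),
    Function.update_self]
  have hrest : ∀ w ∈ Finset.univ.erase v,
      (if Function.update X v a w = Function.update Y v b w then (0 : ℝ) else 1)
        = if X w = Y w then 0 else 1 := fun w hw => by
    rw [Function.update_of_ne (Finset.ne_of_mem_erase hw),
      Function.update_of_ne (Finset.ne_of_mem_erase hw)]
  rw [Finset.sum_congr rfl hrest]
  ring

lemma le_sum_of_single_site_le {β : Type} [DecidableEq V]
    (d : β → β → ℝ) (hself : ∀ x, d x x = 0) (htri : ∀ x y z, d x z ≤ d x y + d y z)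
    (F : (V → α) → β) (c : V → ℝ)
    (hc : ∀ u σ τ, (∀ w, w ≠ u → σ w = τ w) → d (F σ) (F τ) ≤ c u) (X Y : V → α) :
    d (F X) (F Y) ≤ ∑ u ∈ Finset.univ.filter fun u => X u ≠ Y u, c u := by
  -- walk from `X` to `Y` through the hybrids that read `Y` on `S` and `X` off `S`
  let H : Finset V → V → α := fun S w => if w ∈ S then Y w else X w
  have hwalk : ∀ S, d (F X) (F (H S)) ≤ ∑ u ∈ S, c u := by
    intro S
    induction S using Finset.induction_on with
    | empty => simp [H, hself]
    | insert u S hu ih =>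
      have hstep : d (F (H S)) (F (H (insert u S))) ≤ c u :=
        hc u _ _ fun w hw => by simp [H, hw]
      rw [Finset.sum_insert hu, add_comm]
      exact (htri _ _ _).trans (add_le_add ih hstep)
  have hY : H (Finset.univ.filter fun u => X u ≠ Y u) = Y := by
    funext w
    by_cases h : X w = Y w <;> simp [H, h]
  simpa [hY] using hwalk (Finset.univ.filter fun u => X u ≠ Y u)

end Hamming

section Resampling

variable {V α : Type} [Fintype V] [DecidableEq V] [Fintype α] [DecidableEq α]

lemma sum_ite_update_eq (X Z : V → α) (v : V) (f : α → ℝ) :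
    ∑ a, (if Function.update X v a = Z then f a else 0)
      = if ∀ u, u ≠ v → Z u = X u then f (Z v) else 0 := by
  split_ifs with hZ
  · have hiff : ∀ a, Function.update X v a = Z ↔ a = Z v := fun a => by
      constructor
      · rintro rfl; simp
      · rintro rfl
        funext u
        by_cases hu : u = v
        · subst hu; simp
        · rw [Function.update_of_ne hu, hZ u hu]
    simp [hiff]
  · refine Finset.sum_eq_zero fun a _ => if_neg ?_
    rintro rfl
    exact hZ fun u hu => Function.update_of_ne hu _ _

def resampleStep (X : V → α) (μ : V → α → ℝ) : (V → α) → ℝ := fun Z =>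
  (1 / (Fintype.card V : ℝ)) * ∑ v, ∑ a, if Function.update X v a = Z then μ v a else 0

def resampleCoupling (X Y : V → α) (π : V → α × α → ℝ) : (V → α) × (V → α) → ℝ := fun p =>
  (1 / (Fintype.card V : ℝ)) * ∑ v, ∑ ab : α × α,
    if (Function.update X v ab.1, Function.update Y v ab.2) = p then π v ab else 0

lemma isCoupling_resampleCoupling {X Y : V → α} {π : V → α × α → ℝ} {μ ν : V → α → ℝ}
    (hπ : ∀ v, IsCoupling (π v) (μ v) (ν v)) :
    IsCoupling (resampleCoupling X Y π) (resampleStep X μ) (resampleStep Y ν) := by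
  refine ⟨fun p => ?_, fun Z₁ => ?_, fun Z₂ => ?_⟩
  · refine mul_nonneg (by positivity)
      (Finset.sum_nonneg fun v _ => Finset.sum_nonneg fun ab _ => ?_)
    split_ifs
    exacts [(hπ v).1 ab, le_rfl]
  · simp only [resampleCoupling, resampleStep, ← Finset.mul_sum]
    congr 1
    rw [Finset.sum_comm]
    refine Finset.sum_congr rfl fun v _ => ?_
    rw [Finset.sum_comm, Fintype.sum_prod_type]
    refine Finset.sum_congr rfl fun a _ => ?_
    simp only [Prod.mk.injEq, ite_and]
    split_ifs
    · simpa using (hπ v).2.1 a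
    · simp
  · simp only [resampleCoupling, resampleStep, ← Finset.mul_sum]
    congr 1
    rw [Finset.sum_comm]
    refine Finset.sum_congr rfl fun v _ => ?_
    rw [Finset.sum_comm, Fintype.sum_prod_type, Finset.sum_comm]
    refine Finset.sum_congr rfl fun b _ => ?_
    simp only [Prod.mk.injEq, ite_and, Finset.sum_ite_eq, Finset.mem_univ, if_true]
    split_ifs
    · exact (hπ v).2.2 b
    · simp

lemma sum_resampleCoupling_mul (X Y : V → α) (π : V → α × α → ℝ) (c : (V → α) → (V → α) → ℝ) :
    ∑ p, resampleCoupling X Y π p * c p.1 p.2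
      = (1 / (Fintype.card V : ℝ)) * ∑ v, ∑ ab : α × α,
          π v ab * c (Function.update X v ab.1) (Function.update Y v ab.2) := by
  simp only [resampleCoupling, mul_assoc, ← Finset.mul_sum, Finset.sum_mul]
  congr 1
  rw [Finset.sum_comm]
  refine Finset.sum_congr rfl fun v _ => ?_
  rw [Finset.sum_comm]
  simp [ite_mul]

lemma sum_mul_hamming_update {π : α × α → ℝ} (hπ : ∑ ab, π ab = 1) (X Y : V → α) (v : V) :
    ∑ ab, π ab * hamming (Function.update X v ab.1) (Function.update Y v ab.2)
      = hamming X Y - (if X v = Y v then 0 else 1)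
        + ∑ ab, π ab * (if ab.1 = ab.2 then 0 else 1) := by
  simp only [eq_sub_of_add_eq (hamming_update_add X Y v _ _), sub_add_eq_add_sub, mul_sub,
    mul_add, Finset.sum_sub_distrib, Finset.sum_add_distrib, ← Finset.sum_mul, hπ]
  ring

end Resampling

lemma edgeFactor_nonneg {V : Type} {q : ℕ} {AE : Fin q → Fin q → ℝ} (hAE : ∀ i j, 0 ≤ AE i j)
    (τ : V → Fin q) (e : Sym2 V) : 0 ≤ edgeFactor AE τ e := by
  induction e using Sym2.ind with
  | _ u v => exact div_nonneg (add_nonneg (hAE _ _) (hAE _ _)) zero_le_two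

section SpinSystem

variable {V : Type} [Fintype V] [DecidableEq V] {q : ℕ}
  {G : SimpleGraph V} {AE : Fin q → Fin q → ℝ} {AV : Fin q → ℝ}

lemma condWeight_nonneg (hAE : ∀ i j, 0 ≤ AE i j) (hAV : ∀ i, 0 ≤ AV i)
    (Λ : Finset V) (σ τ : V → Fin q) : 0 ≤ condWeight G AE AV Λ σ τ := by
  unfold condWeight
  refine mul_nonneg (mul_nonneg ?_ (Finset.prod_nonneg fun v _ => hAV _))
    (Finset.prod_nonneg fun e _ => edgeFactor_nonneg hAE τ e)
  split_ifs <;> norm_num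

lemma isDist_condDist (hAE : ∀ i j, 0 ≤ AE i j) (hAV : ∀ i, 0 ≤ AV i)
    (hperm : Permissive G AE AV) (Λ : Finset V) (σ : V → Fin q) :
    IsDist (condDist G AE AV Λ σ) :=
  ⟨fun τ => div_nonneg (condWeight_nonneg hAE hAV Λ σ τ) (hperm Λ σ).le,
    by unfold condDist; rw [← Finset.sum_div]; exact div_self (hperm Λ σ).ne'⟩

lemma IsDist.marginalAt {μ : (V → Fin q) → ℝ} (hμ : IsDist μ) (v : V) :
    IsDist (marginalAt μ v) := by
  refine ⟨fun c => Finset.sum_nonneg fun τ _ => ?_, ?_⟩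
  · split_ifs
    exacts [hμ.1 τ, le_rfl]
  · unfold SpinFormal.marginalAt
    rw [Finset.sum_comm]
    simpa using hμ.2

def siteMarginal (G : SimpleGraph V) (AE : Fin q → Fin q → ℝ) (AV : Fin q → ℝ)
    (σ : V → Fin q) (v : V) : Fin q → ℝ :=
  marginalAt (condDist G AE AV ({v} : Finset V)ᶜ σ) v

lemma isDist_siteMarginal (hAE : ∀ i j, 0 ≤ AE i j) (hAV : ∀ i, 0 ≤ AV i)
    (hperm : Permissive G AE AV) (σ : V → Fin q) (v : V) : IsDist (siteMarginal G AE AV σ v) :=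
  (isDist_condDist hAE hAV hperm _ σ).marginalAt v

lemma glauberStep_eq_resampleStep (X : V → Fin q) :
    glauberStep G AE AV X = resampleStep X (siteMarginal G AE AV X) := by
  funext Z
  simp only [glauberStep, resampleStep, sum_ite_update_eq]
  rfl

lemma tvDist_le_dobrushinRho (hAE : ∀ i j, 0 ≤ AE i j) (hAV : ∀ i, 0 ≤ AV i)
    (hperm : Permissive G AE AV) {u : V} (v : V) {σ τ : V → Fin q} (h : ∀ w, w ≠ u → σ w = τ w) :
    tvDist (siteMarginal G AE AV σ v) (siteMarginal G AE AV τ v) ≤ dobrushinRho G AE AV u v := by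
  refine le_csSup ⟨1, ?_⟩ ⟨σ, τ, h, rfl⟩
  rintro t ⟨σ', τ', -, rfl⟩
  exact tvDist_le_one (isDist_siteMarginal hAE hAV hperm σ' v)
    (isDist_siteMarginal hAE hAV hperm τ' v)

lemma tvDist_le_sum_dobrushinRho (hAE : ∀ i j, 0 ≤ AE i j) (hAV : ∀ i, 0 ≤ AV i)
    (hperm : Permissive G AE AV) (X Y : V → Fin q) (v : V) :
    tvDist (siteMarginal G AE AV X v) (siteMarginal G AE AV Y v)
      ≤ ∑ u ∈ Finset.univ.filter fun u => X u ≠ Y u, dobrushinRho G AE AV u v :=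
  le_sum_of_single_site_le tvDist tvDist_self tvDist_triangle
    (siteMarginal G AE AV · v) (dobrushinRho G AE AV · v)
    (fun _ _ _ h => tvDist_le_dobrushinRho hAE hAV hperm v h) X Y

lemma sum_overlapCoupling_mul_hamming_update_le (hAE : ∀ i j, 0 ≤ AE i j)
    (hAV : ∀ i, 0 ≤ AV i) (hperm : Permissive G AE AV) (X Y : V → Fin q) (v : V) :
    ∑ ab, overlapCoupling (siteMarginal G AE AV X v) (siteMarginal G AE AV Y v) ab
        * hamming (Function.update X v ab.1) (Function.update Y v ab.2)
      ≤ hamming X Y - (if X v = Y v then 0 else 1)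
        + ∑ u ∈ Finset.univ.filter (fun u => X u ≠ Y u), dobrushinRho G AE AV u v := by
  have hμ := isDist_siteMarginal hAE hAV hperm X v
  have hν := isDist_siteMarginal hAE hAV hperm Y v
  have hmass : ∑ ab, overlapCoupling (siteMarginal G AE AV X v) (siteMarginal G AE AV Y v) ab
      = 1 := by
    rw [Fintype.sum_prod_type]
    simp only [(isCoupling_overlapCoupling hμ hν).2.1, hμ.2]
  rw [sum_mul_hamming_update hmass]
  gcongr
  exact (overlapCoupling_offDiag_le hμ hν).trans
    (tvDist_le_sum_dobrushinRho hAE hAV hperm X Y v)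

lemma sum_sub_add_sum_dobrushinRho_le {δ : ℝ} (hDS : DobrushinShlosman G AE AV δ)
    (X Y : V → Fin q) :
    ∑ v, (hamming X Y - (if X v = Y v then 0 else 1)
        + ∑ u ∈ Finset.univ.filter (fun u => X u ≠ Y u), dobrushinRho G AE AV u v)
      ≤ ((Fintype.card V : ℝ) - δ) * hamming X Y := by
  have hinfluence : ∑ v, ∑ u ∈ Finset.univ.filter (fun u => X u ≠ Y u), dobrushinRho G AE AV u v
      ≤ (1 - δ) * hamming X Y := by
    rw [Finset.sum_comm, hamming, mul_comm, ← nsmul_eq_mul, ← Finset.sum_const]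
    exact Finset.sum_le_sum fun u _ => hDS u
  rw [Finset.sum_add_distrib, Finset.sum_sub_distrib, ← hamming_eq_sum, Finset.sum_const,
    Finset.card_univ, nsmul_eq_mul]
  linarith

end SpinSystem

end SpinFormal

open SpinFormal

theorem glauber_contraction_of_dobrushin_shlosman_general
    {V : Type} [Fintype V] [DecidableEq V] {q : ℕ}
    (G : SimpleGraph V) (AE : Fin q → Fin q → ℝ) (AV : Fin q → ℝ)
    (hAEnn : ∀ i j, 0 ≤ AE i j) (hAVnn : ∀ i, 0 ≤ AV i)
    (hperm : Permissive G AE AV)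
    (δ : ℝ)
    (hDS : DobrushinShlosman G AE AV δ) :
    ∀ X Y : V → Fin q,
      Wass hamming (glauberStep G AE AV X) (glauberStep G AE AV Y)
        ≤ (1 - δ / (Fintype.card V : ℝ)) * hamming X Y := by
  intro X Y
  set n : ℝ := (Fintype.card V : ℝ)
  let π : V → Fin q × Fin q → ℝ := fun v =>
    overlapCoupling (siteMarginal G AE AV X v) (siteMarginal G AE AV Y v)
  calc Wass hamming (glauberStep G AE AV X) (glauberStep G AE AV Y)
      ≤ ∑ p, resampleCoupling X Y π p * hamming p.1 p.2 := by
        rw [glauberStep_eq_resampleStep, glauberStep_eq_resampleStep]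
        exact wass_le_of_isCoupling hamming_nonneg (isCoupling_resampleCoupling fun v =>
          isCoupling_overlapCoupling (isDist_siteMarginal hAEnn hAVnn hperm X v)
            (isDist_siteMarginal hAEnn hAVnn hperm Y v))
    _ = 1 / n * ∑ v, ∑ ab, π v ab * hamming (Function.update X v ab.1) (Function.update Y v ab.2) :=
        sum_resampleCoupling_mul X Y π hamming
    _ ≤ 1 / n * ((n - δ) * hamming X Y) := by
        gcongr
        exact (Finset.sum_le_sum fun v _ =>
          sum_overlapCoupling_mul_hamming_update_le hAEnn hAVnn hperm X Y v).trans
            (sum_sub_add_sum_dobrushinRho_le hDS X Y)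
    _ ≤ (1 - δ / n) * hamming X Y := by
        have hn : 0 ≤ n := Nat.cast_nonneg _
        rcases hn.eq_or_lt with hn | hn
        · simpa [← hn] using hamming_nonneg X Y
        · rw [one_div, inv_mul_le_iff₀ hn, ← mul_assoc, mul_one_sub, mul_div_cancel₀ _ hn.ne']

/-- under the Dobrushin–Shlosman condition with gap `δ`, the Glauber
dynamics is `(1 − δ/n)`-contractive in Hamming Wasserstein distance. -/
theorem glauber_contraction_of_dobrushin_shlosman
    {V : Type} [Fintype V] [DecidableEq V] {q : ℕ}
    (G : SimpleGraph V) (AE : Fin q → Fin q → ℝ) (AV : Fin q → ℝ)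
    (hq : 2 ≤ q)
    (hAEsymm : ∀ i j, AE i j = AE j i)
    (hAEnn : ∀ i j, 0 ≤ AE i j) (hAVnn : ∀ i, 0 ≤ AV i)
    (hperm : Permissive G AE AV)
    (δ : ℝ) (hδ0 : 0 < δ) (hδ1 : δ < 1)
    (hDS : DobrushinShlosman G AE AV δ) :
    ∀ X Y : V → Fin q,
      Wass hamming (glauberStep G AE AV X) (glauberStep G AE AV Y)
        ≤ (1 - δ / (Fintype.card V : ℝ)) * hamming X Y :=
  glauber_contraction_of_dobrushin_shlosman_general G AE AV hAEnn hAVnn hperm δ hDS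
end
end
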